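/- (Correctness of the compress optimization) Let D be an N×N matrix over ZMod 2 with D·D = 0, and suppose i is a negative index of D, i.e., there exists k such that (k,i) is a pivot pair of D. Let D' be the matrix obtained from D by setting every entry in the i-th row to zero. Then the pivot pairs of D' coincide exactly with the pivot pairs of D. -/

import Mathlib

/-- `i` is the pivot of column `j` of `M`: the largest row index with a nonzero entry.
(Row/column `p : Fin N` corresponds to index `p+1 ∈ {1,…,N}` of the paper.) -/
def IsLow {N : ℕ} (M : Matrix (Fin N) (Fin N) (ZMod 2)) (i j : Fin N) : Prop :=
  M i j ≠ 0 ∧ ∀ i' : Fin N, M i' j ≠ 0 → i' ≤ i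

/-- A matrix is reduced if its nonzero columns have pairwise distinct pivots. -/
def IsReducedMat {N : ℕ} (M : Matrix (Fin N) (Fin N) (ZMod 2)) : Prop :=
  ∀ i j j' : Fin N, IsLow M i j → IsLow M i j' → j = j'

/-- `rankLL M a b` is the rank of the lower-left submatrix `M[≥ a, ≤ b]` formed by the
rows with (1-based) index `≥ a` and the columns with (1-based) index `≤ b`. -/
noncomputable def rankLL {N : ℕ} (M : Matrix (Fin N) (Fin N) (ZMod 2)) (a b : ℕ) : ℕ :=
  (Matrix.of fun (p : {p : Fin N // a ≤ (p : ℕ) + 1}) (q : {q : Fin N // (q : ℕ) + 1 ≤ b}) =>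
    M p.1 q.1).rank

/-- `V` is upper-triangular. -/
def UpperTri {N : ℕ} (V : Matrix (Fin N) (Fin N) (ZMod 2)) : Prop :=
  ∀ a b : Fin N, b < a → V a b = 0

/-- `(i,j)` is a pivot pair of `D`: it is a pivot pair of some reduced matrix `D * V` with
`V` invertible and upper-triangular (this does not depend on the choice of `V`). -/
def IsPivotPairOf {N : ℕ} (D : Matrix (Fin N) (Fin N) (ZMod 2)) (i j : Fin N) : Prop :=
  ∃ V : Matrix (Fin N) (Fin N) (ZMod 2),
    IsUnit V ∧ UpperTri V ∧ IsReducedMat (D * V) ∧ IsLow (D * V) i j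

/-!
Let `V` be an invertible upper-triangular matrix reducing `D` and `R = D * V`, so that column `i`
of `R` is nonzero. The pivot of a combination of columns of a reduced matrix is the largest pivot
of the nonzero columns involved; in particular such a combination vanishes only if it involves
zero columns alone. Now `R * (V⁻¹ * R) = D * D * V = 0`, and if some column `j` of `R` had pivot
`i`, then `(V⁻¹ * R) i j ≠ 0`, so this vanishing combination would involve column `i`. Hence no
column of `R` has pivot `i`, and zeroing row `i` of `R = D * V` changes no pivot. Pivots do not
depend on `V`: for `W` invertible upper-triangular, both `W` and `W⁻¹` have nonzero diagonal, so
by the same fact each pivot of `R * W` dominates the corresponding pivot of `R`, and conversely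
since `R = R * W * W⁻¹`.
-/

section

variable {N : ℕ}

theorem exists_isLow_of_ne_zero {M : Matrix (Fin N) (Fin N) (ZMod 2)} {p j : Fin N}
    (hp : M p j ≠ 0) : ∃ m, IsLow M m j := by
  classical
  let S := Finset.univ.filter fun q => M q j ≠ 0
  obtain ⟨m, hmS, hmax⟩ := S.exists_max_image id ⟨p, by simp [S, hp]⟩
  exact ⟨m, by simpa [S] using hmS, fun i' hi' => hmax i' (by simp [S, hi'])⟩

theorem IsReducedMat.exists_le_mul_apply_ne_zero {R W : Matrix (Fin N) (Fin N) (ZMod 2)}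
    (hR : IsReducedMat R) {m q j : Fin N} (hm : IsLow R m q) (hW : W q j ≠ 0) :
    ∃ p, m ≤ p ∧ (R * W) p j ≠ 0 := by
  classical
  let S := Finset.univ.filter fun x : Fin N × Fin N => R x.1 x.2 ≠ 0 ∧ W x.2 j ≠ 0
  have hmq : (m, q) ∈ S := by simp [S, hm.1, hW]
  obtain ⟨⟨p, q₀⟩, hS, hmax⟩ := S.exists_max_image Prod.fst ⟨_, hmq⟩
  simp only [S, Finset.mem_filter, Finset.mem_univ, true_and] at hS
  -- `p` is the largest pivot among the columns `q'` of `R` with `W q' j ≠ 0`, and since `R` is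
  -- reduced it is the pivot of `q₀` alone
  have hlow : ∀ {q'}, R p q' ≠ 0 → W q' j ≠ 0 → IsLow R p q' := fun {q'} h1 h2 =>
    ⟨h1, fun i' hi' => hmax (i', q') (by simp [S, hi', h2])⟩
  refine ⟨p, hmax _ hmq, ?_⟩
  rw [Matrix.mul_apply, Finset.sum_eq_single q₀]
  · exact mul_ne_zero hS.1 hS.2
  · intro q' _ hq'
    by_contra h
    obtain ⟨h1, h2⟩ := mul_ne_zero_iff.1 h
    exact hq' (hR _ _ _ (hlow h1 h2) (hlow hS.1 hS.2))
  · simp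

theorem IsReducedMat.isLow_mul_of_isLow {R W W' : Matrix (Fin N) (Fin N) (ZMod 2)}
    (hR : IsReducedMat R) (hRW : IsReducedMat (R * W)) (hWW' : W * W' = 1) {a j : Fin N}
    (hW : W j j ≠ 0) (hW' : W' j j ≠ 0) (h : IsLow R a j) : IsLow (R * W) a j := by
  obtain ⟨p, hap, hp⟩ := hR.exists_le_mul_apply_ne_zero h hW
  obtain ⟨m, hm⟩ := exists_isLow_of_ne_zero hp
  obtain ⟨p', hmp', hp'⟩ := hRW.exists_le_mul_apply_ne_zero hm hW'
  rw [Matrix.mul_assoc, hWW', Matrix.mul_one] at hp'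
  obtain rfl : m = a := le_antisymm (hmp'.trans (h.2 _ hp')) (hap.trans (hm.2 _ hp))
  exact hm

theorem UpperTri.isUpperTriangular {V : Matrix (Fin N) (Fin N) (ZMod 2)} (hV : UpperTri V) :
    V.IsUpperTriangular :=
  fun a b hab => hV a b hab

theorem UpperTri.nonsing_inv {V : Matrix (Fin N) (Fin N) (ZMod 2)} (hV : UpperTri V) :
    UpperTri V⁻¹ := by
  by_cases hdet : IsUnit V.det
  · have := V.invertibleOfIsUnitDet hdet
    exact fun a b hab => Matrix.blockTriangular_inv_of_blockTriangular hV.isUpperTriangular hab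
  · simp [Matrix.nonsing_inv_apply_not_isUnit V hdet, UpperTri]

theorem UpperTri.diag_ne_zero {V : Matrix (Fin N) (Fin N) (ZMod 2)} (hV : UpperTri V)
    (hu : IsUnit V) (j : Fin N) : V j j ≠ 0 := by
  have hdet := ((Matrix.isUnit_iff_isUnit_det V).1 hu).ne_zero
  rw [Matrix.det_of_isUpperTriangular hV.isUpperTriangular] at hdet
  exact Finset.prod_ne_zero_iff.1 hdet j (Finset.mem_univ j)

theorem IsReducedMat.isLow_mul_iff {R W : Matrix (Fin N) (Fin N) (ZMod 2)}
    (hR : IsReducedMat R) (hRW : IsReducedMat (R * W)) (hu : IsUnit W) (ht : UpperTri W)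
    (a j : Fin N) : IsLow (R * W) a j ↔ IsLow R a j := by
  have hdet := (Matrix.isUnit_iff_isUnit_det W).1 hu
  have hu' : IsUnit W⁻¹ := Matrix.isUnit_nonsing_inv_iff.2 hu
  refine ⟨fun h => ?_, hR.isLow_mul_of_isLow hRW (Matrix.mul_nonsing_inv W hdet)
    (ht.diag_ne_zero hu j) (ht.nonsing_inv.diag_ne_zero hu' j)⟩
  have hR' : R * W * W⁻¹ = R := by
    rw [Matrix.mul_assoc, Matrix.mul_nonsing_inv W hdet, Matrix.mul_one]
  have := hRW.isLow_mul_of_isLow (hR'.symm ▸ hR) (Matrix.nonsing_inv_mul W hdet)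
    (ht.nonsing_inv.diag_ne_zero hu' j) (ht.diag_ne_zero hu j) h
  rwa [hR'] at this

theorem isPivotPairOf_iff_isLow {D V : Matrix (Fin N) (Fin N) (ZMod 2)} (hu : IsUnit V)
    (ht : UpperTri V) (hr : IsReducedMat (D * V)) (a b : Fin N) :
    IsPivotPairOf D a b ↔ IsLow (D * V) a b := by
  refine ⟨fun ⟨V₂, hu₂, ht₂, hr₂, hab⟩ => ?_, fun hab => ⟨V, hu, ht, hr, hab⟩⟩
  have hdet₂ := (Matrix.isUnit_iff_isUnit_det V₂).1 hu₂
  have hDV : D * V = D * V₂ * (V₂⁻¹ * V) := by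
    rw [Matrix.mul_assoc, ← Matrix.mul_assoc V₂, Matrix.mul_nonsing_inv V₂ hdet₂, Matrix.one_mul]
  have htW : UpperTri (V₂⁻¹ * V) := fun p q hqp =>
    (ht₂.nonsing_inv.isUpperTriangular.mul ht.isUpperTriangular) hqp
  rw [hDV]
  exact (hr₂.isLow_mul_iff (hDV ▸ hr) ((Matrix.isUnit_nonsing_inv_iff.2 hu₂).mul hu) htW a b).2 hab

theorem UpperTri.mul_apply_of_isLow {U M : Matrix (Fin N) (Fin N) (ZMod 2)} (hU : UpperTri U)
    {i j : Fin N} (h : IsLow M i j) : (U * M) i j = U i i * M i j := by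
  rw [Matrix.mul_apply, Finset.sum_eq_single i]
  · intro q _ hqi
    rcases lt_or_gt_of_ne hqi with hlt | hgt
    · rw [hU i q hlt, zero_mul]
    · rw [not_ne_iff.1 fun hq => (h.2 q hq).not_gt hgt, mul_zero]
  · simp

theorem IsLow.not_isLow_of_mul_self_eq_zero {D V : Matrix (Fin N) (Fin N) (ZMod 2)}
    (hD : D * D = 0) (hu : IsUnit V) (ht : UpperTri V) (hr : IsReducedMat (D * V)) {k i : Fin N}
    (hki : IsLow (D * V) k i) (j : Fin N) : ¬ IsLow (D * V) i j := by
  intro hij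
  have hdet := (Matrix.isUnit_iff_isUnit_det V).1 hu
  have hzero : D * V * (V⁻¹ * (D * V)) = 0 := by
    rw [← Matrix.mul_assoc, Matrix.mul_assoc D, Matrix.mul_nonsing_inv V hdet, Matrix.mul_one,
      ← Matrix.mul_assoc, hD, Matrix.zero_mul]
  have hij' : (V⁻¹ * (D * V)) i j ≠ 0 := by
    rw [ht.nonsing_inv.mul_apply_of_isLow hij]
    exact mul_ne_zero (ht.nonsing_inv.diag_ne_zero (Matrix.isUnit_nonsing_inv_iff.2 hu) i) hij.1
  obtain ⟨p, -, hp⟩ := hr.exists_le_mul_apply_ne_zero hki hij'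
  exact hp (by rw [hzero, Matrix.zero_apply])

theorem isLow_updateRow_zero_iff {M : Matrix (Fin N) (Fin N) (ZMod 2)} {i : Fin N}
    (hi : ∀ j, ¬ IsLow M i j) (a b : Fin N) : IsLow (M.updateRow i 0) a b ↔ IsLow M a b := by
  have hentry : ∀ p q, M.updateRow i 0 p q ≠ 0 ↔ p ≠ i ∧ M p q ≠ 0 := by
    intro p q
    by_cases hp : p = i <;> simp [Matrix.updateRow_apply, hp]
  constructor
  · rintro ⟨hab, hmax⟩
    refine ⟨((hentry a b).1 hab).2, fun p hp => ?_⟩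
    obtain ⟨m, hm⟩ := exists_isLow_of_ne_zero hp
    have hmi : m ≠ i := by rintro rfl; exact hi b hm
    exact (hm.2 p hp).trans (hmax m ((hentry m b).2 ⟨hmi, hm.1⟩))
  · intro h
    have hai : a ≠ i := by rintro rfl; exact hi b h
    exact ⟨(hentry a b).2 ⟨hai, h.1⟩, fun p hp => h.2 p ((hentry p b).1 hp).2⟩

theorem IsReducedMat.updateRow_zero {M : Matrix (Fin N) (Fin N) (ZMod 2)} (hM : IsReducedMat M)
    {i : Fin N} (hi : ∀ j, ¬ IsLow M i j) : IsReducedMat (M.updateRow i 0) := by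
  intro a j j'
  simp only [isLow_updateRow_zero_iff hi]
  exact hM a j j'

end

/-- Correctness of the compress optimization: if `D * D = 0` and `i` is a negative index of
`D` (i.e. `(k,i)` is a pivot pair of `D` for some `k`), then setting the `i`-th row of `D`
to zero does not change the pivot pairs. -/
theorem compress_correct {N : ℕ} (D : Matrix (Fin N) (Fin N) (ZMod 2)) (hD : D * D = 0)
    (k i : Fin N) (hneg : IsPivotPairOf D k i) :
    ∀ a b : Fin N,
      IsPivotPairOf (Matrix.of fun p q => if p = i then 0 else D p q) a b ↔
        IsPivotPairOf D a b := by
  obtain ⟨V, hu, ht, hr, hki⟩ := hneg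
  have hi := hki.not_isLow_of_mul_self_eq_zero hD hu ht hr
  have hcompress : (Matrix.of fun p q => if p = i then 0 else D p q) * V =
      (D * V).updateRow i 0 := by
    rw [← Matrix.zero_vecMul V, ← Matrix.updateRow_mul]
    congr 1
    ext p q
    simp [Matrix.updateRow_apply]
  intro a b
  rw [isPivotPairOf_iff_isLow hu ht (hcompress ▸ hr.updateRow_zero hi), hcompress,
    isLow_updateRow_zero_iff hi, isPivotPairOf_iff_isLow hu ht hr]
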